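/- Let G be a 3-regular graph with 2n vertices whose adjacency spectrum is λ₁,...,λ₂ₙ. Then the adjacency spectrum of the even CFI graph G₀ of G consists of 2λ₁,...,2λ₂ₙ together with the eigenvalue +2 with multiplicity 3n and the eigenvalue −2 with multiplicity 3n. In particular, G₀ (which has 8n ≥ 8 vertices) never has simple spectrum. -/

import Mathlib

/-!
Write `U = cfiEigenbasis G` and `B = cfiBlock G`. The columns of `U` are the eigenvectors of the
paper in a form that needs no orientation of the edges: for a vertex `w` of `G` the indicator of
the fibre over `w`, and for an edge `e` with an endpoint `w` the vector supported on the fibre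
over `w` whose value at `(w, S)` is `±1` according as `e ∈ S`. The fibre over a vertex of a cubic
graph is the Klein four-group of even subsets of its three edges, and on it these columns
restrict to its four characters. Orthogonality of characters gives `Uᵀ U = 4`, and, since two
vertices in adjacent fibres are adjacent iff they agree on the edge joining the fibres, it also
gives `A₀ U = U B`, where `B` is `2 A(G)` on the vertex columns and swaps the two columns of each
edge with weight `2`. Hence `A₀` and `B` have the same characteristic polynomial
`charpoly (2 A(G)) * (X² - 4) ^ |E|`, and `|E| = 3n ≥ 2` makes `2` a repeated root.
-/

open Finset SimpleGraph Polynomial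

variable {V : Type*} [Fintype V] [DecidableEq V]

/-- Vertices of the CFI graph `G_U`. -/
def CFIVert (G : SimpleGraph V) [DecidableRel G.Adj] (U : Finset V) : Type _ :=
  {p : V × Finset (Sym2 V) //
    p.2 ⊆ G.incidenceFinset p.1 ∧ p.2.card % 2 = (if p.1 ∈ U then 1 else 0)}

/-- The CFI graph `G_U`: `(v,S)` and `(u,T)` are adjacent iff `uv ∈ E(G)` and
`uv ∉ S △ T`. -/
def CFIGraph (G : SimpleGraph V) [DecidableRel G.Adj] (U : Finset V) :
    SimpleGraph (CFIVert G U) where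
  Adj a b := G.Adj a.1.1 b.1.1 ∧ s(a.1.1, b.1.1) ∉ symmDiff a.1.2 b.1.2
  symm := by
    constructor
    rintro a b ⟨h1, h2⟩
    refine ⟨h1.symm, ?_⟩
    rwa [Sym2.eq_swap, symmDiff_comm]
  loopless := by constructor; rintro a ⟨h1, _⟩; exact G.irrefl h1

instance (G : SimpleGraph V) [DecidableRel G.Adj] (U : Finset V) :
    Fintype (CFIVert G U) := by
  unfold CFIVert; infer_instance

instance (G : SimpleGraph V) [DecidableRel G.Adj] (U : Finset V) :
    DecidableEq (CFIVert G U) := by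
  unfold CFIVert; infer_instance

instance (G : SimpleGraph V) [DecidableRel G.Adj] (U : Finset V) :
    DecidableRel (CFIGraph G U).Adj := fun a b => by
  unfold CFIGraph; exact instDecidableAnd

open Matrix
open scoped Kronecker

section LinearAlgebra

variable {R m n : Type*} [Fintype m] [Fintype n] [DecidableEq m] [DecidableEq n]

theorem Matrix.charpoly_eq_of_mul_eq_mul [CommRing R] (hcard : Fintype.card m = Fintype.card n)
    {U : Matrix m n R} {U' : Matrix n m R} (hU : U' * U = 1) {A : Matrix m m R}
    {B : Matrix n n R} (h : A * U = U * B) : A.charpoly = B.charpoly := by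
  have hUU' : U * U' = 1 := (mul_eq_one_comm_of_card_eq n m R hcard.symm).1 hU
  calc A.charpoly = (U * (B * U')).charpoly := by
        rw [← Matrix.mul_assoc, ← h, Matrix.mul_assoc, hUU', Matrix.mul_one]
    _ = (B * U' * U).charpoly := by
        rw [charpoly_mul_comm_of_le _ _ hcard.ge, hcard, Nat.sub_self, pow_zero, one_mul]
    _ = B.charpoly := by rw [Matrix.mul_assoc, hU, Matrix.mul_one]

theorem Matrix.charpoly_smul_of_eq_prod {K ι : Type*} [Field K] [Infinite K] [Fintype ι]
    {A : Matrix n n K} {μ : ι → K} (hA : A.charpoly = ∏ i, (X - C (μ i))) (c : K) :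
    (c • A).charpoly = ∏ i, (X - C (c * μ i)) := by
  have hcard : Fintype.card n = Fintype.card ι := by
    simpa [natDegree_prod_of_monic _ _ fun i _ => monic_X_sub_C (μ i)] using
      congrArg natDegree hA
  rcases eq_or_ne c 0 with rfl | hc
  · simp [charpoly_zero, hcard]
  refine Polynomial.funext fun x => ?_
  have hscale : scalar n x - c • A = c • (scalar n (x / c) - A) := by
    ext i j
    by_cases h : i = j
    · simp [h]
      field_simp
    · simp [h]
  rw [eval_charpoly, hscale, det_smul, ← eval_charpoly, hA, eval_prod, eval_prod, hcard,
    ← Finset.card_univ, ← prod_const, ← prod_mul_distrib]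
  refine prod_congr rfl fun i _ => ?_
  simp only [eval_sub, eval_X, eval_C]
  field_simp

theorem Matrix.charpoly_one_kronecker [CommRing R] (N : Matrix n n R) :
    ((1 : Matrix m m R) ⊗ₖ N).charpoly = N.charpoly ^ Fintype.card m := by
  have : charmatrix ((1 : Matrix m m R) ⊗ₖ N) = (1 : Matrix m m R[X]) ⊗ₖ charmatrix N := by
    ext ⟨i, j⟩ ⟨i', j'⟩
    by_cases hi : i = i' <;> by_cases hj : j = j' <;> simp [hi, hj]
  rw [charpoly, this, det_kronecker, det_one, one_pow, one_mul, charpoly]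

theorem Polynomial.not_sq_dvd_prod_X_sub_C {K ι : Type*} [Field K] [Fintype ι] {μ : ι → K}
    (hμ : Function.Injective μ) (a : K) : ¬ (X - C a) ^ 2 ∣ ∏ i, (X - C (μ i)) := fun h =>
  not_isUnit_X_sub_C a ((separable_prod_X_sub_C_iff.2 hμ).squarefree _ (sq (X - C a) ▸ h))

end LinearAlgebra

section EvenSubsets

variable {α : Type*}

def evenSubsets (I : Finset α) : Finset (Finset α) :=
  I.powerset.filter fun T => T.card % 2 = 0

theorem mem_evenSubsets {I T : Finset α} : T ∈ evenSubsets I ↔ T ⊆ I ∧ T.card % 2 = 0 := by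
  rw [evenSubsets, mem_filter, mem_powerset]

variable [DecidableEq α]

def memSign (T : Finset α) (e : α) : ℝ := if e ∈ T then 1 else -1

theorem sum_evenSubsets_triple {M : Type*} [AddCommMonoid M] {a b c : α} (hab : a ≠ b)
    (hac : a ≠ c) (hbc : b ≠ c) (g : Finset α → M) :
    ∑ T ∈ evenSubsets {a, b, c}, g T = g ∅ + g {b, c} + g {a, c} + g {a, b} := by
  have ha : a ∉ ({b, c} : Finset α) := by simp [hab, hac]
  have hb : b ∉ insert c (∅ : Finset α) := by simp [hbc]
  rw [evenSubsets, sum_filter, sum_powerset_insert ha, ← insert_empty (a := c)]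
  simp only [sum_powerset_insert hb, sum_powerset_insert (notMem_empty c), powerset_empty,
    sum_singleton]
  simp [hab, hac, hbc, card_insert_of_notMem]
  abel

theorem card_evenSubsets {I : Finset α} (hI : I.card = 3) : (evenSubsets I).card = 4 := by
  obtain ⟨a, b, c, hab, hac, hbc, rfl⟩ := card_eq_three.1 hI
  rw [card_eq_sum_ones, sum_evenSubsets_triple hab hac hbc]

theorem sum_evenSubsets_memSign {I : Finset α} (hI : I.card = 3) {e : α} (he : e ∈ I) :
    ∑ T ∈ evenSubsets I, memSign T e = 0 := by
  obtain ⟨a, b, c, hab, hac, hbc, rfl⟩ := card_eq_three.1 hI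
  rw [sum_evenSubsets_triple hab hac hbc]
  simp only [mem_insert, mem_singleton] at he
  rcases he with rfl | rfl | rfl <;> simp [memSign, hab, hac, hbc, hab.symm, hac.symm, hbc.symm]

theorem sum_evenSubsets_memSign_mul_memSign {I : Finset α} (hI : I.card = 3) {e f : α}
    (he : e ∈ I) (hf : f ∈ I) :
    ∑ T ∈ evenSubsets I, memSign T e * memSign T f = if e = f then 4 else 0 := by
  obtain ⟨a, b, c, hab, hac, hbc, rfl⟩ := card_eq_three.1 hI
  rw [sum_evenSubsets_triple hab hac hbc]
  simp only [mem_insert, mem_singleton] at he hf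
  rcases he with rfl | rfl | rfl <;> rcases hf with rfl | rfl | rfl <;>
    simp [memSign, hab, hac, hbc, hab.symm, hac.symm, hbc.symm] <;> norm_num

theorem ite_mem_iff_mem_eq_memSign (S T : Finset α) (f : α) :
    (if (f ∈ S ↔ f ∈ T) then (1 : ℝ) else 0) = (1 + memSign S f * memSign T f) / 2 := by
  by_cases hS : f ∈ S <;> by_cases hT : f ∈ T <;> simp [memSign, hS, hT]

theorem sum_evenSubsets_ite_mem_iff_mem {I : Finset α} (hI : I.card = 3) {f : α} (hf : f ∈ I)
    (S : Finset α) : ∑ T ∈ evenSubsets I, (if (f ∈ S ↔ f ∈ T) then (1 : ℝ) else 0) = 2 := by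
  simp only [ite_mem_iff_mem_eq_memSign, ← sum_div, sum_add_distrib, ← mul_sum, sum_evenSubsets_memSign hI hf,
    sum_const, card_evenSubsets hI]
  norm_num

theorem sum_evenSubsets_ite_mem_iff_mem_mul_memSign {I : Finset α} (hI : I.card = 3) {e f : α}
    (he : e ∈ I) (hf : f ∈ I) (S : Finset α) :
    ∑ T ∈ evenSubsets I, (if (f ∈ S ↔ f ∈ T) then (1 : ℝ) else 0) * memSign T e =
      if f = e then 2 * memSign S e else 0 := by
  simp only [ite_mem_iff_mem_eq_memSign, div_mul_eq_mul_div, ← sum_div, add_mul, one_mul, sum_add_distrib,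
    mul_assoc, ← mul_sum, sum_evenSubsets_memSign hI he,
    sum_evenSubsets_memSign_mul_memSign hI hf he]
  split_ifs with h <;> simp [h]
  ring

end EvenSubsets

section Endpoints

variable {α : Type*}

noncomputable def edgeEnd (e : Sym2 α) (b : Bool) : α := if b then e.out.1 else e.out.2

theorem mk_edgeEnd_not (e : Sym2 α) (b : Bool) : s(edgeEnd e b, edgeEnd e !b) = e := by
  cases b
  · rw [Sym2.eq_swap]
    exact Quot.out_eq e
  · exact Quot.out_eq e

theorem edgeEnd_mem (e : Sym2 α) (b : Bool) : edgeEnd e b ∈ e := by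
  have := Sym2.mem_mk_left (edgeEnd e b) (edgeEnd e !b)
  rwa [mk_edgeEnd_not] at this

theorem adj_edgeEnd {G : SimpleGraph α} {e : Sym2 α} (he : e ∈ G.edgeSet) (b : Bool) :
    G.Adj (edgeEnd e b) (edgeEnd e !b) := by
  rwa [← mem_edgeSet, mk_edgeEnd_not]

theorem edgeEnd_inj {G : SimpleGraph α} {e : Sym2 α} (he : e ∈ G.edgeSet) {b b' : Bool} :
    edgeEnd e b = edgeEnd e b' ↔ b = b' := by
  refine ⟨fun h => ?_, congrArg _⟩
  by_contra hb
  obtain rfl : b' = !b := by cases b <;> cases b' <;> simp_all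
  exact (adj_edgeEnd he b).ne h

end Endpoints

section CFIEigenbasis

variable {α : Type*} {G : SimpleGraph α}

noncomputable def cfiBase : α ⊕ G.edgeSet × Bool → α
  | .inl w => w
  | .inr (e, b) => edgeEnd e b

def cfiCharacter [DecidableEq α] : α ⊕ G.edgeSet × Bool → Finset (Sym2 α) → ℝ
  | .inl _, _ => 1
  | .inr (e, _), T => memSign T e

end CFIEigenbasis

theorem SimpleGraph.IsRegularOfDegree.card_incidenceFinset {α : Type*} [Fintype α]
    [DecidableEq α] {G : SimpleGraph α} [DecidableRel G.Adj] {k : ℕ} (h : G.IsRegularOfDegree k)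
    (v : α) : (G.incidenceFinset v).card = k :=
  (G.card_incidenceFinset_eq_degree v).trans (h v)

theorem SimpleGraph.IsRegularOfDegree.two_mul_card_edgeSet {α : Type*} [Fintype α]
    {G : SimpleGraph α} [DecidableRel G.Adj] {k : ℕ} (h : G.IsRegularOfDegree k) :
    2 * Fintype.card G.edgeSet = k * Fintype.card α := by
  rw [← edgeFinset_card, ← sum_degrees_eq_twice_card_edges]
  simp [h _, mul_comm]

section CFI

variable (G : SimpleGraph V) [DecidableRel G.Adj]

noncomputable def cfiEigenbasis : Matrix (CFIVert G ∅) (V ⊕ G.edgeSet × Bool) ℝ :=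
  of fun p k => if p.1.1 = cfiBase k then cfiCharacter k p.1.2 else 0

def cfiBlock : Matrix (V ⊕ G.edgeSet × Bool) (V ⊕ G.edgeSet × Bool) ℝ :=
  fromBlocks ((2 : ℝ) • G.adjMatrix ℝ) 0 0
    ((1 : Matrix G.edgeSet G.edgeSet ℝ) ⊗ₖ of fun b b' : Bool => if b = b' then 0 else 2)

theorem mem_incidenceFinset_edgeEnd (e : G.edgeSet) (b : Bool) :
    (e : Sym2 V) ∈ G.incidenceFinset (edgeEnd e b) :=
  (G.mem_incidenceFinset _ _).2 ⟨e.2, edgeEnd_mem _ _⟩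

theorem sum_cfiVert_ite_eq {M : Type*} [AddCommMonoid M] (w : V) (f : Finset (Sym2 V) → M) :
    ∑ q : CFIVert G ∅, (if q.1.1 = w then f q.1.2 else 0) =
      ∑ T ∈ evenSubsets (G.incidenceFinset w), f T := by
  rw [← sum_filter]
  refine sum_nbij (fun q => q.1.2) ?_ ?_ ?_ fun _ _ => rfl
  · rintro q hq
    rw [mem_filter] at hq
    have := q.2
    rw [hq.2] at this
    simpa [mem_evenSubsets] using this
  · rintro q hq q' hq' h
    rw [mem_coe, mem_filter] at hq hq'
    exact Subtype.ext (Prod.ext (hq.2.trans hq'.2.symm) h)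
  · intro T hT
    rw [mem_coe, mem_evenSubsets] at hT
    exact ⟨⟨(w, T), by simpa using hT⟩, mem_coe.2 (mem_filter.2 ⟨mem_univ _, rfl⟩), rfl⟩

theorem card_cfiVert (hreg : G.IsRegularOfDegree 3) :
    Fintype.card (CFIVert G ∅) = 4 * Fintype.card V := by
  have hfiber (w : V) : (evenSubsets (G.incidenceFinset w)).card = 4 :=
    card_evenSubsets (hreg.card_incidenceFinset w)
  calc Fintype.card (CFIVert G ∅)
      = ∑ q : CFIVert G ∅, ∑ w : V, if q.1.1 = w then 1 else 0 := by simp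
    _ = ∑ w : V, (evenSubsets (G.incidenceFinset w)).card := by
        rw [sum_comm]
        exact sum_congr rfl fun w _ =>
          (sum_cfiVert_ite_eq G w fun _ => 1).trans (card_eq_sum_ones _).symm
    _ = 4 * Fintype.card V := by simp [hfiber, mul_comm]

theorem sum_cfiCharacter_mul_cfiCharacter (hreg : G.IsRegularOfDegree 3)
    {k k' : V ⊕ G.edgeSet × Bool} {w : V} (hk : cfiBase k = w) (hk' : cfiBase k' = w) :
    ∑ T ∈ evenSubsets (G.incidenceFinset w), cfiCharacter k T * cfiCharacter k' T =
      if k = k' then 4 else 0 := by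
  have hI := hreg.card_incidenceFinset w
  have hinc {e : G.edgeSet} {b : Bool} (h : edgeEnd e b = w) :
      (e : Sym2 V) ∈ G.incidenceFinset w :=
    h ▸ mem_incidenceFinset_edgeEnd G e b
  rcases k with v | ⟨e, b⟩ <;> rcases k' with v' | ⟨e', b'⟩ <;> simp only [cfiBase] at hk hk'
  · simp [cfiCharacter, hk, hk', card_evenSubsets hI]
  · simp [cfiCharacter, sum_evenSubsets_memSign hI (hinc hk')]
  · simp [cfiCharacter, sum_evenSubsets_memSign hI (hinc hk)]
  · simp only [cfiCharacter, Sum.inr.injEq, Prod.mk.injEq]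
    rw [sum_evenSubsets_memSign_mul_memSign hI (hinc hk) (hinc hk')]
    refine if_congr ⟨fun h => ?_, fun ⟨h, _⟩ => congrArg _ h⟩ rfl rfl
    obtain rfl : e = e' := Subtype.ext h
    exact ⟨rfl, (edgeEnd_inj e.2).1 (hk.trans hk'.symm)⟩

theorem cfiEigenbasis_transpose_mul_self (hreg : G.IsRegularOfDegree 3) :
    (cfiEigenbasis G)ᵀ * cfiEigenbasis G = (4 : ℝ) • 1 := by
  ext k k'
  rw [mul_apply, Matrix.smul_apply, one_apply]
  by_cases h : cfiBase k = cfiBase k'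
  · calc ∑ p, (cfiEigenbasis G)ᵀ k p * cfiEigenbasis G p k'
        = ∑ p : CFIVert G ∅, if p.1.1 = cfiBase k then
            cfiCharacter k p.1.2 * cfiCharacter k' p.1.2 else 0 :=
          sum_congr rfl fun p _ => by
            by_cases hp : p.1.1 = cfiBase k <;> simp [cfiEigenbasis, hp, ← h]
      _ = ∑ T ∈ evenSubsets (G.incidenceFinset (cfiBase k)),
            cfiCharacter k T * cfiCharacter k' T :=
          sum_cfiVert_ite_eq G _ fun T => cfiCharacter k T * cfiCharacter k' T
      _ = if k = k' then 4 else 0 := sum_cfiCharacter_mul_cfiCharacter G hreg rfl h.symm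
      _ = _ := by split_ifs <;> simp
  · have hkk' : k ≠ k' := fun hkk' => h (hkk' ▸ rfl)
    rw [if_neg hkk', smul_zero]
    refine sum_eq_zero fun p _ => ?_
    by_cases hp : p.1.1 = cfiBase k <;> simp [cfiEigenbasis, hp, h]

theorem cfiGraph_adj_iff {U : Finset V} {a b : CFIVert G U} :
    (CFIGraph G U).Adj a b ↔ G.Adj a.1.1 b.1.1 ∧ s(a.1.1, b.1.1) ∉ symmDiff a.1.2 b.1.2 :=
  Iff.rfl

theorem adjMatrix_cfiGraph_mul_cfiEigenbasis_apply (p : CFIVert G ∅)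
    {k : V ⊕ G.edgeSet × Bool} {w : V} (hk : cfiBase k = w) :
    ((CFIGraph G ∅).adjMatrix ℝ * cfiEigenbasis G) p k =
      if G.Adj p.1.1 w then
        ∑ T ∈ evenSubsets (G.incidenceFinset w),
          (if (s(p.1.1, w) ∈ p.1.2 ↔ s(p.1.1, w) ∈ T) then 1 else 0) * cfiCharacter k T
      else 0 := by
  subst hk
  have hnot (x : Sym2 V) (S T : Finset (Sym2 V)) : x ∉ symmDiff S T ↔ (x ∈ S ↔ x ∈ T) := by
    rw [mem_symmDiff]
    tauto
  rw [mul_apply]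
  split_ifs with hadj
  · refine (sum_congr rfl fun q _ => ?_).trans (sum_cfiVert_ite_eq G _ fun T =>
      (if (s(p.1.1, cfiBase k) ∈ p.1.2 ↔ s(p.1.1, cfiBase k) ∈ T) then 1 else 0) *
        cfiCharacter k T)
    by_cases hq : q.1.1 = cfiBase k <;>
      simp [cfiEigenbasis, adjMatrix_apply, cfiGraph_adj_iff, hq, hadj, hnot]
  · refine sum_eq_zero fun q _ => ?_
    by_cases hq : q.1.1 = cfiBase k <;>
      simp [cfiEigenbasis, adjMatrix_apply, cfiGraph_adj_iff, hq, hadj]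

theorem cfiEigenbasis_mul_cfiBlock_inl (p : CFIVert G ∅) (w : V) :
    (cfiEigenbasis G * cfiBlock G) p (.inl w) = if G.Adj p.1.1 w then 2 else 0 := by
  rw [mul_apply, Fintype.sum_eq_single (.inl p.1.1)]
  · simp [cfiEigenbasis, cfiBlock, cfiBase, cfiCharacter, adjMatrix_apply]
  · rintro (v | x) hk
    · simp [cfiEigenbasis, cfiBase, Ne.symm (Sum.inl_injective.ne_iff.1 hk)]
    · simp [cfiBlock]

theorem cfiEigenbasis_mul_cfiBlock_inr (p : CFIVert G ∅) (e : G.edgeSet) (b : Bool) :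
    (cfiEigenbasis G * cfiBlock G) p (.inr (e, b)) =
      if p.1.1 = edgeEnd e !b then 2 * memSign p.1.2 e else 0 := by
  rw [mul_apply, Fintype.sum_eq_single (.inr (e, !b))]
  · by_cases h : p.1.1 = edgeEnd e !b <;>
      simp [cfiEigenbasis, cfiBlock, cfiBase, cfiCharacter, h, mul_comm]
  · rintro (v | ⟨e', b'⟩) hk
    · simp [cfiBlock]
    · have : e' ≠ e ∨ b' = b := by
        by_contra! h
        exact hk (by cases b <;> cases b' <;> simp_all)
      rcases this with he | rfl
      · simp [cfiBlock, one_apply, he]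
      · simp [cfiBlock]

theorem adjMatrix_cfiGraph_mul_cfiEigenbasis (hreg : G.IsRegularOfDegree 3) :
    (CFIGraph G ∅).adjMatrix ℝ * cfiEigenbasis G = cfiEigenbasis G * cfiBlock G := by
  have hinc {v w : V} (h : G.Adj v w) : s(v, w) ∈ G.incidenceFinset w :=
    (G.mem_incidenceFinset _ _).2 ⟨h, Sym2.mem_mk_right _ _⟩
  ext p k
  rcases k with w | ⟨e, b⟩
  · rw [adjMatrix_cfiGraph_mul_cfiEigenbasis_apply G p (w := w) rfl,
      cfiEigenbasis_mul_cfiBlock_inl]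
    simp only [cfiCharacter, mul_one]
    by_cases hadj : G.Adj p.1.1 w
    · rw [if_pos hadj, if_pos hadj, sum_evenSubsets_ite_mem_iff_mem (hreg.card_incidenceFinset w) (hinc hadj)]
    · rw [if_neg hadj, if_neg hadj]
  · rw [adjMatrix_cfiGraph_mul_cfiEigenbasis_apply G p (w := edgeEnd e b) rfl,
      cfiEigenbasis_mul_cfiBlock_inr]
    simp only [cfiCharacter]
    have hother := adj_edgeEnd e.2 (!b)
    have hedge := mk_edgeEnd_not (e : Sym2 V) (!b)
    rw [Bool.not_not] at hother hedge
    by_cases hadj : G.Adj p.1.1 (edgeEnd e b)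
    · rw [if_pos hadj, sum_evenSubsets_ite_mem_iff_mem_mul_memSign (hreg.card_incidenceFinset _)
        (mem_incidenceFinset_edgeEnd G e b) (hinc hadj)]
      exact if_congr ⟨fun h => Sym2.congr_left.1 (h.trans hedge.symm), fun h => by rw [h, hedge]⟩
        rfl rfl
    · rw [if_neg hadj, if_neg fun h : p.1.1 = edgeEnd e !b => hadj (h ▸ hother)]

theorem charpoly_cfiBlock :
    (cfiBlock G).charpoly =
      ((2 : ℝ) • G.adjMatrix ℝ).charpoly * (X ^ 2 - C 4) ^ Fintype.card G.edgeSet := by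
  have hswap : (of fun b b' : Bool => if b = b' then (0 : ℝ) else 2).charpoly = X ^ 2 - C 4 := by
    rw [charpoly_of_card_eq_two _ (by simp), ← det_submatrix_equiv_self finTwoEquiv, det_fin_two]
    simp [trace, finTwoEquiv, sub_eq_add_neg]
    rw [← C_mul]
    norm_num
  rw [cfiBlock, charpoly_fromBlocks_zero₁₂, charpoly_one_kronecker, hswap]

end CFI

/-- Let `G` be a 3-regular graph on `2n ≥ 2` vertices with adjacency
spectrum `λ₁, …, λ₂ₙ` (i.e. `charpoly = ∏ᵢ (X - λᵢ)`).  Then the adjacency spectrum of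
the even CFI graph `G₀ = G_∅` consists of `2λ₁, …, 2λ₂ₙ` together with `+2` and `-2`
each with multiplicity `3n`.  In particular `G₀` never has simple spectrum. -/
theorem cfi_even_graph_spectrum
    (G : SimpleGraph V) [DecidableRel G.Adj] (n : ℕ) (hn : 1 ≤ n)
    (hcard : Fintype.card V = 2 * n) (hreg : G.IsRegularOfDegree 3)
    (lam : Fin (2 * n) → ℝ)
    (hlam : (G.adjMatrix ℝ).charpoly = ∏ i, (X - C (lam i))) :
    ((CFIGraph G (∅ : Finset V)).adjMatrix ℝ).charpoly
        = (∏ i : Fin (2 * n), (X - C (2 * lam i)))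
            * (X - C 2) ^ (3 * n) * (X + C 2) ^ (3 * n) ∧
    ¬ ∃ mu : Fin (8 * n) → ℝ, Function.Injective mu ∧
        ((CFIGraph G (∅ : Finset V)).adjMatrix ℝ).charpoly = ∏ i, (X - C (mu i)) := by
  have hedges : Fintype.card G.edgeSet = 3 * n := by
    have := hreg.two_mul_card_edgeSet
    omega
  have hsquare : Fintype.card (CFIVert G ∅) = Fintype.card (V ⊕ G.edgeSet × Bool) := by
    rw [card_cfiVert G hreg, Fintype.card_sum, Fintype.card_prod, Fintype.card_bool]
    omega
  have hinv : ((4 : ℝ)⁻¹ • (cfiEigenbasis G)ᵀ) * cfiEigenbasis G = 1 := by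
    rw [Matrix.smul_mul, cfiEigenbasis_transpose_mul_self G hreg, smul_smul]
    norm_num
  have hspec : ((CFIGraph G ∅).adjMatrix ℝ).charpoly
      = (∏ i, (X - C (2 * lam i))) * (X - C 2) ^ (3 * n) * (X + C 2) ^ (3 * n) := by
    rw [charpoly_eq_of_mul_eq_mul hsquare hinv (adjMatrix_cfiGraph_mul_cfiEigenbasis G hreg),
      charpoly_cfiBlock, charpoly_smul_of_eq_prod hlam, hedges,
      show (X ^ 2 - C 4 : ℝ[X]) = (X - C 2) * (X + C 2) by
        rw [show (4 : ℝ) = 2 * 2 by norm_num, C_mul]; ring, mul_pow, mul_assoc]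
  refine ⟨hspec, fun ⟨mu, hmu, hmuA⟩ => not_sq_dvd_prod_X_sub_C hmu 2 ?_⟩
  rw [← hmuA, hspec]
  exact dvd_mul_of_dvd_left (dvd_mul_of_dvd_right (pow_dvd_pow _ (by omega)) _) _
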